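/- Assume additionally that ∫_{1/2}^1 μ(α) dα > 0. Then there exists γ₀ ∈ (0, 1/4) with b_μ := ∫_{1/2+γ₀}^{1-γ₀} μ(α) dα > 0 such that, with b̄_μ := sin(π γ₀) b_μ, the kernel g satisfies g(t) ≤ (1/(b̄_μ π)) · ( 1/γ₀ + Γ(1/2 - γ₀) · t^{γ₀ - 1/2} ) for all t > 0; in particular g ∈ L²(0,T) for every T > 0. -/

import Mathlib

/-!
On `[1/2 + γ, 1 - γ]` we have `sin (π α) ≥ sin (π γ)` and
`r ^ α ≥ min (r ^ (1 - γ)) (r ^ (1/2 + γ))`, so `S r ≥ b̄ · min (r ^ (1 - γ)) (r ^ (1/2 + γ))`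
as soon as `b_μ > 0`; such a `γ` exists because the integrals over `(1/2 + γ, 1 - γ)` converge to
the positive integral over `(1/2, 1)` as `γ → 0`. Since `S / (S² + C²) ≤ 1 / S`, the integrand
defining `g t` is then dominated by `b̄⁻¹ (𝟙_{(0,1]} r ^ (γ - 1) + r ^ (-1/2 - γ) e^{-t r})`, whose
integral is `1/γ + Γ(1/2 - γ) t ^ (γ - 1/2)`. This bound is square integrable near `0` because
`γ > 0`, and `g` is measurable because it is nonincreasing in `t`.
-/

open MeasureTheory Real Set

theorem rpow_le_max_one_self {r α : ℝ} (hr : 0 < r) (h0 : 0 ≤ α) (h1 : α ≤ 1) :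
    r ^ α ≤ max 1 r := by
  rcases le_total r 1 with h | h
  · exact le_max_of_le_left (rpow_le_one hr.le h h0)
  · exact le_max_of_le_right (by simpa using rpow_le_rpow_of_exponent_le h h1)

theorem min_rpow_le_rpow {r a b α : ℝ} (hr : 0 < r) (ha : a ≤ α) (hb : α ≤ b) :
    min (r ^ b) (r ^ a) ≤ r ^ α := by
  rcases le_total r 1 with h | h
  · exact (min_le_left _ _).trans (rpow_le_rpow_of_exponent_ge hr h hb)
  · exact (min_le_right _ _).trans (rpow_le_rpow_of_exponent_le h ha)

theorem sin_pi_mul_le_sin_pi_mul {γ α : ℝ} (hγ : 0 ≤ γ) (hα : 1/2 + γ ≤ α)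
    (hα1 : α ≤ 1 - γ) :
    sin (π * γ) ≤ sin (π * α) := by
  have hπ := pi_pos
  rw [← sin_pi_sub (π * α), ← mul_one_sub]
  exact strictMonoOn_sin.monotoneOn ⟨by nlinarith, by nlinarith⟩
    ⟨by nlinarith, by nlinarith⟩ (by nlinarith)

theorem mul_div_sq_add_sq_le_div {e s c : ℝ} (he : 0 ≤ e) (hs : 0 < s) :
    e * s / (s ^ 2 + c ^ 2) ≤ e / s := by
  rw [div_le_div_iff₀ (by positivity) hs]
  nlinarith [mul_nonneg he (sq_nonneg c)]

theorem exists_pos_setIntegral_Ioo_add_sub {f : ℝ → ℝ} {a b δ : ℝ} (hδ : 0 < δ)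
    (hpos : 0 < ∫ x in Ioo a b, f x) :
    ∃ γ ∈ Ioo 0 δ, 0 < ∫ x in Ioo (a + γ) (b - γ), f x := by
  obtain ⟨u, hu_anti, hu_mem, hu_lim⟩ := exists_seq_strictAnti_tendsto' hδ
  have hunion : ⋃ n, Ioo (a + u n) (b - u n) = Ioo a b := by
    refine Subset.antisymm (iUnion_subset fun n x hx => ?_) fun x hx => ?_
    · have hun := (hu_mem n).1
      exact ⟨by linarith [hx.1], by linarith [hx.2]⟩
    · obtain ⟨n, hn⟩ := (hu_lim.eventually (gt_mem_nhds (lt_min (sub_pos.2 hx.1)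
        (sub_pos.2 hx.2)))).exists
      exact mem_iUnion.2 ⟨n, by linarith [min_le_left (x - a) (b - x)],
        by linarith [min_le_right (x - a) (b - x)]⟩
  have hmono : Monotone fun n => Ioo (a + u n) (b - u n) := fun m n hmn =>
    Ioo_subset_Ioo (by linarith [hu_anti.antitone hmn]) (by linarith [hu_anti.antitone hmn])
  have hlim := tendsto_setIntegral_of_monotone (fun _ => measurableSet_Ioo) hmono
    (hunion ▸ Integrable.of_integral_ne_zero hpos.ne')
  rw [hunion] at hlim
  obtain ⟨n, hn⟩ := (hlim.eventually (lt_mem_nhds hpos)).exists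
  exact ⟨u n, hu_mem n, hn⟩

theorem memLp_two_rpow_Ioo {s T : ℝ} (hs : -(1/2) < s) (hT : 0 < T) :
    MemLp (fun t : ℝ => t ^ s) 2 (volume.restrict (Ioo 0 T)) := by
  have hmeas : AEStronglyMeasurable (fun t : ℝ => t ^ s) (volume.restrict (Ioo 0 T)) :=
    (continuousOn_id.rpow_const fun t ht => Or.inl ht.1.ne').aestronglyMeasurable measurableSet_Ioo
  rw [memLp_two_iff_integrable_sq hmeas]
  refine ((intervalIntegral.integrableOn_Ioo_rpow_iff hT).2 (by linarith : -1 < 2 * s)).congr_fun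
    (fun t ht => ?_) measurableSet_Ioo
  rw [← rpow_natCast, ← rpow_mul ht.1.le, mul_comm]
  norm_num

section WeightedRpowIntegral

variable {μ φ : ℝ → ℝ}

theorem integrableOn_mul_rpow_mul (hμ : IntegrableOn μ (Ioo 0 1)) (hφ : Continuous φ)
    (hφ1 : ∀ x, |φ x| ≤ 1) {r : ℝ} (hr : 0 < r) :
    IntegrableOn (fun α => φ α * r ^ α * μ α) (Ioo 0 1) := by
  refine (hμ.norm.const_mul (max 1 r)).mono
    ((hφ.mul (continuous_const.rpow continuous_id fun _ => Or.inl hr.ne')).aestronglyMeasurable.mul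
      hμ.1) ?_
  filter_upwards [self_mem_ae_restrict measurableSet_Ioo] with α hα
  simp only [norm_mul, norm_eq_abs, abs_abs]
  rw [abs_of_pos (rpow_pos_of_pos hr α), abs_of_pos (lt_max_of_lt_left one_pos)]
  refine mul_le_mul_of_nonneg_right ?_ (abs_nonneg _)
  simpa using mul_le_mul (hφ1 α) (rpow_le_max_one_self hr hα.1.le hα.2.le) (by positivity)
    zero_le_one

theorem aestronglyMeasurable_integral_mul_rpow_mul
    (hμ : AEStronglyMeasurable μ (volume.restrict (Ioo 0 1))) (hφ : Continuous φ)
    (ν : Measure ℝ) [SFinite ν] :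
    AEStronglyMeasurable (fun r => ∫ α in Ioo 0 1, φ α * r ^ α * μ α) ν := by
  refine AEStronglyMeasurable.integral_prod_right'
    (f := fun p : ℝ × ℝ => φ p.2 * p.1 ^ p.2 * μ p.2) (.mul ?_ hμ.comp_snd)
  exact ((hφ.comp continuous_snd).measurable.mul
    (measurable_fst.pow measurable_snd)).aestronglyMeasurable

theorem le_integral_sin_mul_rpow_mul (hμ : IntegrableOn μ (Ioo 0 1))
    (hμ0 : ∀ α ∈ Ioo (0:ℝ) 1, 0 ≤ μ α) {γ r : ℝ} (hγ : 0 ≤ γ) (hr : 0 < r) :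
    sin (π * γ) * (∫ α in Ioo (1/2 + γ) (1 - γ), μ α) * min (r ^ (1 - γ)) (r ^ (1/2 + γ))
      ≤ ∫ α in Ioo 0 1, sin (π * α) * r ^ α * μ α := by
  have hπ := pi_pos
  have hsub : Ioo (1/2 + γ) (1 - γ) ⊆ Ioo 0 1 :=
    Ioo_subset_Ioo (by linarith) (by linarith)
  have hint := integrableOn_mul_rpow_mul hμ (φ := fun α => sin (π * α)) (by fun_prop)
    (fun α => abs_sin_le_one _) hr
  have hsin0 : ∀ α ∈ Ioo (0:ℝ) 1, 0 ≤ sin (π * α) := fun α hα =>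
    sin_nonneg_of_nonneg_of_le_pi (by nlinarith [hα.1]) (by nlinarith [hα.2])
  calc sin (π * γ) * (∫ α in Ioo (1/2 + γ) (1 - γ), μ α) * min (r ^ (1 - γ)) (r ^ (1/2 + γ))
      = ∫ α in Ioo (1/2 + γ) (1 - γ),
          sin (π * γ) * min (r ^ (1 - γ)) (r ^ (1/2 + γ)) * μ α := by
        rw [integral_const_mul]; ring
    _ ≤ ∫ α in Ioo (1/2 + γ) (1 - γ), sin (π * α) * r ^ α * μ α := by
        refine setIntegral_mono_on ((hμ.mono_set hsub).const_mul _) (hint.mono_set hsub)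
          measurableSet_Ioo fun α hα => ?_
        gcongr
        · exact hμ0 α (hsub hα)
        · exact hsin0 α (hsub hα)
        · exact sin_pi_mul_le_sin_pi_mul hγ hα.1.le hα.2.le
        · exact min_rpow_le_rpow hr hα.1.le hα.2.le
    _ ≤ ∫ α in Ioo 0 1, sin (π * α) * r ^ α * μ α := by
        refine setIntegral_mono_set hint ?_ hsub.eventuallyLE
        filter_upwards [self_mem_ae_restrict measurableSet_Ioo] with α hα
        exact mul_nonneg (mul_nonneg (hsin0 α hα) (rpow_nonneg hr.le α)) (hμ0 α hα)

end WeightedRpowIntegral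

-- The exponent `1/2 - γ - 1` is kept in the shape `a - 1` of Mathlib's Gamma integrals.
noncomputable def kernelMajorant (γ t r : ℝ) : ℝ :=
  (Ioc 0 1).indicator (fun r => r ^ (γ - 1)) r + r ^ (1/2 - γ - 1) * exp (-(t * r))

section KernelMajorant

variable {γ t : ℝ}

theorem exp_div_min_rpow_le_kernelMajorant (hγ : γ ≤ 1/4) (ht : 0 ≤ t) {r : ℝ}
    (hr : 0 < r) :
    exp (-r * t) / min (r ^ (1 - γ)) (r ^ (1/2 + γ)) ≤ kernelMajorant γ t r := by
  rcases le_or_gt r 1 with hr1 | hr1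
  · have hexp : exp (-r * t) ≤ 1 := exp_le_one_iff.2 (by nlinarith)
    rw [min_eq_left (rpow_le_rpow_of_exponent_ge hr hr1 (by linarith)), kernelMajorant,
      indicator_of_mem (show r ∈ Ioc 0 1 from ⟨hr, hr1⟩)]
    calc exp (-r * t) / r ^ (1 - γ) ≤ 1 / r ^ (1 - γ) := by gcongr
      _ = r ^ (γ - 1) := by rw [one_div, ← rpow_neg hr.le, neg_sub]
      _ ≤ _ := le_add_of_nonneg_right (by positivity)
  · rw [min_eq_right (rpow_le_rpow_of_exponent_le hr1.le (by linarith)), kernelMajorant,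
      indicator_of_notMem (fun h => hr1.not_ge h.2), zero_add, div_eq_mul_inv, ← rpow_neg hr.le,
      mul_comm, neg_mul, mul_comm r t, show -(1/2 + γ) = 1/2 - γ - 1 by ring]

theorem integrableOn_indicator_Ioc_rpow (hγ : 0 < γ) :
    IntegrableOn ((Ioc 0 1).indicator fun r : ℝ => r ^ (γ - 1)) (Ioi 0) := by
  rw [IntegrableOn, integrable_indicator_iff measurableSet_Ioc, IntegrableOn,
    Measure.restrict_restrict measurableSet_Ioc, inter_eq_self_of_subset_left Ioc_subset_Ioi_self,
    ← IntegrableOn, ← intervalIntegrable_iff_integrableOn_Ioc_of_le zero_le_one]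
  exact intervalIntegral.intervalIntegrable_rpow' (by linarith)

theorem integral_indicator_Ioc_rpow (hγ : 0 < γ) :
    ∫ r in Ioi 0, (Ioc 0 1).indicator (fun r : ℝ => r ^ (γ - 1)) r = 1 / γ := by
  rw [integral_indicator measurableSet_Ioc, Measure.restrict_restrict measurableSet_Ioc,
    inter_eq_self_of_subset_left Ioc_subset_Ioi_self,
    ← intervalIntegral.integral_of_le zero_le_one,
    integral_rpow (Or.inl (by linarith)), sub_add_cancel, one_rpow, zero_rpow hγ.ne', sub_zero]

theorem integral_rpow_mul_exp_neg_mul_Ioi_eq_Gamma_mul {a t : ℝ} (ha : 0 < a) (ht : 0 < t) :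
    ∫ r in Ioi 0, r ^ (a - 1) * exp (-(t * r)) = Gamma a * t ^ (-a) := by
  rw [integral_rpow_mul_exp_neg_mul_Ioi ha ht, one_div, inv_rpow ht.le, ← rpow_neg ht.le,
    mul_comm]

theorem integrableOn_rpow_mul_exp_neg_mul {a t : ℝ} (ha : 0 < a) (ht : 0 < t) :
    IntegrableOn (fun r => r ^ (a - 1) * exp (-(t * r))) (Ioi 0) :=
  Integrable.of_integral_ne_zero <| by
    rw [integral_rpow_mul_exp_neg_mul_Ioi_eq_Gamma_mul ha ht]
    exact (mul_pos (Gamma_pos_of_pos ha) (rpow_pos_of_pos ht _)).ne'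

theorem integrableOn_kernelMajorant (hγ : 0 < γ) (hγ2 : γ < 1/2) (ht : 0 < t) :
    IntegrableOn (kernelMajorant γ t) (Ioi 0) :=
  (integrableOn_indicator_Ioc_rpow hγ).add (integrableOn_rpow_mul_exp_neg_mul (by linarith) ht)

theorem integral_kernelMajorant (hγ : 0 < γ) (hγ2 : γ < 1/2) (ht : 0 < t) :
    ∫ r in Ioi 0, kernelMajorant γ t r = 1 / γ + Gamma (1/2 - γ) * t ^ (γ - 1/2) := by
  unfold kernelMajorant
  rw [integral_add (integrableOn_indicator_Ioc_rpow hγ)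
    (integrableOn_rpow_mul_exp_neg_mul (by linarith) ht), integral_indicator_Ioc_rpow hγ,
    integral_rpow_mul_exp_neg_mul_Ioi_eq_Gamma_mul (by linarith) ht, neg_sub]

end KernelMajorant

noncomputable def kernelIntegral (S C : ℝ → ℝ) (t : ℝ) : ℝ :=
  ∫ r in Ioi 0, exp (-r * t) * S r / ((S r)^2 + (C r)^2)

section KernelIntegral

variable {S C : ℝ → ℝ} {B γ : ℝ}

theorem pos_of_le_mul_min_rpow
    (hS : ∀ r, 0 < r → B * min (r ^ (1 - γ)) (r ^ (1/2 + γ)) ≤ S r) (hB : 0 < B)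
    {r : ℝ} (hr : 0 < r) :
    0 < S r :=
  (mul_pos hB (lt_min (rpow_pos_of_pos hr _) (rpow_pos_of_pos hr _))).trans_le (hS r hr)

theorem kernelIntegrand_nonneg
    (hS : ∀ r, 0 < r → B * min (r ^ (1 - γ)) (r ^ (1/2 + γ)) ≤ S r) (hB : 0 < B)
    (t : ℝ) {r : ℝ} (hr : 0 < r) :
    0 ≤ exp (-r * t) * S r / ((S r)^2 + (C r)^2) := by
  have := pos_of_le_mul_min_rpow hS hB hr
  positivity

theorem kernelIntegrand_le
    (hS : ∀ r, 0 < r → B * min (r ^ (1 - γ)) (r ^ (1/2 + γ)) ≤ S r) (hB : 0 < B)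
    (hγ : γ ≤ 1/4) {t : ℝ} (ht : 0 ≤ t) {r : ℝ} (hr : 0 < r) :
    exp (-r * t) * S r / ((S r)^2 + (C r)^2) ≤ B⁻¹ * kernelMajorant γ t r := by
  have hmin : 0 < min (r ^ (1 - γ)) (r ^ (1/2 + γ)) := lt_min (by positivity) (by positivity)
  calc exp (-r * t) * S r / ((S r)^2 + (C r)^2)
      ≤ exp (-r * t) / S r :=
        mul_div_sq_add_sq_le_div (exp_nonneg _) ((mul_pos hB hmin).trans_le (hS r hr))
    _ ≤ exp (-r * t) / (B * min (r ^ (1 - γ)) (r ^ (1/2 + γ))) := by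
        gcongr
        exact hS r hr
    _ = B⁻¹ * (exp (-r * t) / min (r ^ (1 - γ)) (r ^ (1/2 + γ))) := by
        rw [div_mul_eq_div_div_swap, div_eq_inv_mul]
    _ ≤ B⁻¹ * kernelMajorant γ t r := by
        gcongr
        exact exp_div_min_rpow_le_kernelMajorant hγ ht hr

theorem kernelIntegral_nonneg
    (hS : ∀ r, 0 < r → B * min (r ^ (1 - γ)) (r ^ (1/2 + γ)) ≤ S r) (hB : 0 < B)
    (t : ℝ) : 0 ≤ kernelIntegral S C t :=
  setIntegral_nonneg measurableSet_Ioi fun _ hr => kernelIntegrand_nonneg hS hB t hr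

theorem kernelIntegral_le
    (hS : ∀ r, 0 < r → B * min (r ^ (1 - γ)) (r ^ (1/2 + γ)) ≤ S r) (hB : 0 < B)
    (hγ0 : 0 < γ) (hγ : γ ≤ 1/4) {t : ℝ} (ht : 0 < t) :
    kernelIntegral S C t ≤ B⁻¹ * (1 / γ + Gamma (1/2 - γ) * t ^ (γ - 1/2)) := by
  rw [← integral_kernelMajorant hγ0 (by linarith) ht, ← integral_const_mul]
  refine integral_mono_of_nonneg ?_
    ((integrableOn_kernelMajorant hγ0 (by linarith) ht).const_mul _) ?_
  · filter_upwards [self_mem_ae_restrict measurableSet_Ioi] with r hr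
    exact kernelIntegrand_nonneg hS hB t hr
  · filter_upwards [self_mem_ae_restrict measurableSet_Ioi] with r hr
    exact kernelIntegrand_le hS hB hγ ht.le hr

theorem antitoneOn_kernelIntegral
    (hS : ∀ r, 0 < r → B * min (r ^ (1 - γ)) (r ^ (1/2 + γ)) ≤ S r) (hB : 0 < B)
    (hγ0 : 0 < γ) (hγ : γ ≤ 1/4)
    (hSm : AEStronglyMeasurable S (volume.restrict (Ioi 0)))
    (hCm : AEStronglyMeasurable C (volume.restrict (Ioi 0))) :
    AntitoneOn (kernelIntegral S C) (Ioi 0) := by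
  intro s hs t ht hst
  have hint : IntegrableOn (fun r => exp (-r * s) * S r / ((S r)^2 + (C r)^2)) (Ioi 0) := by
    refine ((integrableOn_kernelMajorant hγ0 (by linarith) hs).const_mul B⁻¹).mono' ?_ ?_
    · exact ((by fun_prop : Continuous fun r => exp (-r * s)).aestronglyMeasurable.mul hSm).div₀
        ((hSm.pow 2).add (hCm.pow 2))
    · filter_upwards [self_mem_ae_restrict measurableSet_Ioi] with r hr
      rw [norm_of_nonneg (kernelIntegrand_nonneg hS hB s hr)]
      exact kernelIntegrand_le hS hB hγ (le_of_lt hs) hr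
  refine integral_mono_of_nonneg ?_ hint ?_
  · filter_upwards [self_mem_ae_restrict measurableSet_Ioi] with r hr
    exact kernelIntegrand_nonneg hS hB t hr
  · filter_upwards [self_mem_ae_restrict measurableSet_Ioi] with r (hr : 0 < r)
    have := pos_of_le_mul_min_rpow hS hB hr
    gcongr exp ?_ * _ / _
    nlinarith

end KernelIntegral

section Kernel

variable {S C g : ℝ → ℝ} {B γ : ℝ}

theorem le_of_eq_kernelIntegral
    (hS : ∀ r, 0 < r → B * min (r ^ (1 - γ)) (r ^ (1/2 + γ)) ≤ S r) (hB : 0 < B)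
    (hγ0 : 0 < γ) (hγ : γ ≤ 1/4) (hg : ∀ t, 0 < t → g t = 1 / π * kernelIntegral S C t)
    {t : ℝ} (ht : 0 < t) :
    g t ≤ 1 / (B * π) * (1 / γ + Gamma (1/2 - γ) * t ^ (γ - 1/2)) :=
  calc g t ≤ 1 / π * (B⁻¹ * (1 / γ + Gamma (1/2 - γ) * t ^ (γ - 1/2))) := by
        rw [hg t ht]
        gcongr
        exact kernelIntegral_le hS hB hγ0 hγ ht
    _ = _ := by rw [one_div π, one_div (B * π), mul_inv, ← mul_assoc, mul_comm π⁻¹]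

theorem memLp_two_of_eq_kernelIntegral
    (hS : ∀ r, 0 < r → B * min (r ^ (1 - γ)) (r ^ (1/2 + γ)) ≤ S r) (hB : 0 < B)
    (hγ0 : 0 < γ) (hγ : γ ≤ 1/4)
    (hSm : AEStronglyMeasurable S (volume.restrict (Ioi 0)))
    (hCm : AEStronglyMeasurable C (volume.restrict (Ioi 0)))
    (hg : ∀ t, 0 < t → g t = 1 / π * kernelIntegral S C t) {T : ℝ} (hT : 0 < T) :
    MemLp g 2 (volume.restrict (Ioo 0 T)) := by
  have hg_anti : AntitoneOn g (Ioo 0 T) := fun s hs t ht hst => by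
    rw [hg s hs.1, hg t ht.1]
    gcongr
    exact antitoneOn_kernelIntegral hS hB hγ0 hγ hSm hCm hs.1 ht.1 hst
  have hmaj : MemLp (fun t : ℝ => 1 / (B * π) * (1 / γ + Gamma (1/2 - γ) * t ^ (γ - 1/2))) 2
      (volume.restrict (Ioo 0 T)) :=
    ((memLp_const (1 / γ)).add ((memLp_two_rpow_Ioo (s := γ - 1/2) (by linarith) hT).const_mul
      (Gamma (1/2 - γ)))).const_mul (1 / (B * π))
  refine hmaj.of_le
    (aemeasurable_restrict_of_antitoneOn measurableSet_Ioo hg_anti).aestronglyMeasurable ?_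
  filter_upwards [self_mem_ae_restrict measurableSet_Ioo] with t ht
  have hg0 : 0 ≤ g t := by
    rw [hg t ht.1]
    exact mul_nonneg (by positivity) (kernelIntegral_nonneg hS hB t)
  rw [norm_of_nonneg hg0]
  exact (le_of_eq_kernelIntegral hS hB hγ0 hγ hg ht.1).trans (le_norm_self _)

end Kernel

theorem stmt_15_general (μ : ℝ → ℝ)
    (hμ_int : IntegrableOn μ (Ioo 0 1))
    (hμ_nonneg : ∀ α ∈ Ioo (0:ℝ) 1, 0 ≤ μ α)
    (S C g : ℝ → ℝ)
    (hS : ∀ r : ℝ, S r = ∫ α in Ioo (0:ℝ) 1, Real.sin (π * α) * r ^ α * μ α)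
    (hC : ∀ r : ℝ, C r = ∫ α in Ioo (0:ℝ) 1, Real.cos (π * α) * r ^ α * μ α)
    (hg : ∀ t : ℝ, 0 < t →
      g t = (1/π) * ∫ r in Ioi (0:ℝ), Real.exp (-r * t) * S r / ((S r)^2 + (C r)^2))
    (hμhalf : 0 < ∫ α in Ioo (1/2 : ℝ) 1, μ α) :
    ∃ γ₀ ∈ Ioo (0:ℝ) (1/4),
      0 < (∫ α in Ioo (1/2 + γ₀) (1 - γ₀), μ α) ∧
      (∀ t : ℝ, 0 < t →
        g t ≤ (1 / ((Real.sin (π * γ₀) * ∫ α in Ioo (1/2 + γ₀) (1 - γ₀), μ α) * π)) *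
          (1 / γ₀ + Real.Gamma (1/2 - γ₀) * t ^ (γ₀ - 1/2))) ∧
      (∀ T : ℝ, 0 < T → MemLp g 2 (volume.restrict (Ioo 0 T))) := by
  obtain ⟨γ, ⟨hγ0, hγ4⟩, hb⟩ :=
    exists_pos_setIntegral_Ioo_add_sub (by norm_num : (0:ℝ) < 1/4) hμhalf
  have hB : 0 < sin (π * γ) * ∫ α in Ioo (1/2 + γ) (1 - γ), μ α :=
    mul_pos (sin_pos_of_pos_of_lt_pi (by positivity) (by nlinarith [pi_pos])) hb
  have hS_low : ∀ r, 0 < r → (sin (π * γ) * ∫ α in Ioo (1/2 + γ) (1 - γ), μ α) *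
      min (r ^ (1 - γ)) (r ^ (1/2 + γ)) ≤ S r := fun r hr =>
    (hS r).symm ▸ le_integral_sin_mul_rpow_mul hμ_int hμ_nonneg hγ0.le hr
  have hS_meas : AEStronglyMeasurable S (volume.restrict (Ioi 0)) :=
    funext hS ▸ aestronglyMeasurable_integral_mul_rpow_mul hμ_int.1 (by fun_prop) _
  have hC_meas : AEStronglyMeasurable C (volume.restrict (Ioi 0)) :=
    funext hC ▸ aestronglyMeasurable_integral_mul_rpow_mul hμ_int.1 (by fun_prop) _
  exact ⟨γ, ⟨hγ0, hγ4⟩, hb,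
    fun t ht => le_of_eq_kernelIntegral hS_low hB hγ0 hγ4.le hg ht,
    fun T hT => memLp_two_of_eq_kernelIntegral hS_low hB hγ0 hγ4.le hS_meas hC_meas hg hT⟩

/-- If additionally `∫_{1/2}^1 μ(α) dα > 0`, then there exists
`γ₀ ∈ (0,1/4)` with `b_μ := ∫_{1/2+γ₀}^{1-γ₀} μ(α) dα > 0` such that, with
`b̄_μ := sin(πγ₀) b_μ`, the kernel satisfies
`g(t) ≤ (1/(b̄_μ π)) (1/γ₀ + Γ(1/2-γ₀) t^{γ₀-1/2})` for all `t > 0`;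
in particular `g ∈ L²(0,T)` for every `T > 0`. -/
theorem stmt_15 (μ : ℝ → ℝ)
    (hμ_int : IntegrableOn μ (Ioo 0 1))
    (hμ_nonneg : ∀ α ∈ Ioo (0:ℝ) 1, 0 ≤ μ α)
    (hμ_ne : ¬ (∀ᵐ α ∂(volume.restrict (Ioo (0:ℝ) 1)), μ α = 0))
    (S C g : ℝ → ℝ)
    (hS : ∀ r : ℝ, S r = ∫ α in Ioo (0:ℝ) 1, Real.sin (π * α) * r ^ α * μ α)
    (hC : ∀ r : ℝ, C r = ∫ α in Ioo (0:ℝ) 1, Real.cos (π * α) * r ^ α * μ α)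
    (hg : ∀ t : ℝ, 0 < t →
      g t = (1/π) * ∫ r in Ioi (0:ℝ), Real.exp (-r * t) * S r / ((S r)^2 + (C r)^2))
    (hμhalf : 0 < ∫ α in Ioo (1/2 : ℝ) 1, μ α) :
    ∃ γ₀ ∈ Ioo (0:ℝ) (1/4),
      0 < (∫ α in Ioo (1/2 + γ₀) (1 - γ₀), μ α) ∧
      (∀ t : ℝ, 0 < t →
        g t ≤ (1 / ((Real.sin (π * γ₀) * ∫ α in Ioo (1/2 + γ₀) (1 - γ₀), μ α) * π)) *
          (1 / γ₀ + Real.Gamma (1/2 - γ₀) * t ^ (γ₀ - 1/2))) ∧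
      (∀ T : ℝ, 0 < T → MemLp g 2 (volume.restrict (Ioo 0 T))) :=
  stmt_15_general μ hμ_int hμ_nonneg S C g hS hC hg hμhalf
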